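/- Asymptotics for STV: for fixed k ≥ 1, with n = ℓ·m! and ℓ, m, or both tending to infinity, log of [ n! / ( ∏_{S ⊆ {k,...,m-1}} ( ℓ ∏_{c ∈ {1,...,m-1}\S} c )! )^k ] is asymptotically equivalent to n (log m)^2 / 2. -/

import Mathlib

open Filter Asymptotics Finset Real

lemma st_ub (N : ℕ) : Real.log (Nat.factorial N) ≤ N * Real.log N := by
  rcases Nat.eq_zero_or_pos N with h | h
  · simp [h]
  · rw [← Real.log_pow]
    apply Real.log_le_log (by positivity)
    exact_mod_cast Nat.factorial_le_pow N

lemma st_lb (N : ℕ) : (N : ℝ) * Real.log N - N ≤ Real.log (Nat.factorial N) := by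
  rcases Nat.eq_zero_or_pos N with h | h
  · simp [h]
  have hx : (0:ℝ) ≤ N := by positivity
  have h1 : (N:ℝ) ^ N / Nat.factorial N ≤ Real.exp N := by
    refine le_trans ?_ (Real.sum_le_exp_of_nonneg hx (N + 1))
    refine Finset.single_le_sum (f := fun i => (N:ℝ)^i / Nat.factorial i) ?_ ?_
    · intro i _; positivity
    · simp
  have hf : (0:ℝ) < Nat.factorial N := by positivity
  have h2 : (N:ℝ) ^ N ≤ Real.exp N * Nat.factorial N := by
    rw [div_le_iff₀ hf] at h1; linarith
  have h3 := Real.log_le_log (by positivity) h2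
  rw [Real.log_pow, Real.log_mul (by positivity) (ne_of_gt hf), Real.log_exp] at h3
  linarith

lemma tele (F : ℕ → ℝ) : ∀ b a : ℕ, a ≤ b + 1 →
    ∑ c ∈ Finset.Icc a b, (F (c+1) - F c) = F (b+1) - F a := by
  intro b
  induction b with
  | zero =>
    intro a ha
    interval_cases a
    · simp
    · simp
  | succ b ih =>
    intro a ha
    rcases Nat.lt_or_ge a (b+2) with h | h
    · rw [Finset.sum_Icc_succ_top (by omega), ih a (by omega)]
      ring
    · have : a = b + 2 := by omega
      subst this
      rw [Finset.Icc_eq_empty (by omega)]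
      simp

-- pointwise lower for upper bound: f c ≤ F(c+1) - F c for c ≥ 1, F x = (log x)^2/2
lemma P1 (c : ℕ) (hc : 1 ≤ c) :
    Real.log c / (1 + c) ≤ (Real.log (c+1))^2/2 - (Real.log c)^2/2 := by
  have hc0 : (0:ℝ) < c := by exact_mod_cast hc
  have hlc : 0 ≤ Real.log c := Real.log_nonneg (by exact_mod_cast hc)
  have hmono : Real.log c ≤ Real.log (c+1) := Real.log_le_log hc0 (by linarith)
  have hgap : (1:ℝ)/(c+1) ≤ Real.log (c+1) - Real.log c := by
    have h := Real.log_le_sub_one_of_pos (x := c / (c+1)) (by positivity)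
    rw [Real.log_div (ne_of_gt hc0) (by positivity)] at h
    have : (c:ℝ)/(c+1) - 1 = -(1/(c+1)) := by field_simp; ring
    rw [this] at h; linarith
  have key : Real.log c * (1/(c+1)) ≤ ((Real.log (c+1) + Real.log c)/2) * (Real.log (c+1) - Real.log c) := by
    have h1 : Real.log c ≤ (Real.log (c+1) + Real.log c)/2 := by linarith
    have h2 : (0:ℝ) < 1/(c+1) := by positivity
    nlinarith
  calc Real.log c / (1 + c) = Real.log c * (1/(c+1)) := by ring
    _ ≤ ((Real.log (c+1) + Real.log c)/2) * (Real.log (c+1) - Real.log c) := key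
    _ = (Real.log (c+1))^2/2 - (Real.log c)^2/2 := by ring

-- pointwise upper for lower bound: F(c+3) - F(c+2) ≤ f c for c ≥ 404
lemma P2 (c : ℕ) (hc : 404 ≤ c) :
    (Real.log (c+3))^2/2 - (Real.log (c+2))^2/2 ≤ Real.log c / (1 + c) := by
  have hc0 : (0:ℝ) < c := by positivity
  have h404 : (6:ℝ) ≤ Real.log c := by
    rw [Real.le_log_iff_exp_le hc0]
    have he : Real.exp 6 = (Real.exp 1)^6 := by
      rw [← Real.exp_nat_mul]; norm_num
    have : (Real.exp 1)^6 ≤ (2.7182818286:ℝ)^6 :=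
      pow_le_pow_left₀ (Real.exp_pos 1).le Real.exp_one_lt_d9.le 6
    have h404' : (404:ℝ) ≤ c := by exact_mod_cast hc
    nlinarith [this, he]
  have hl2 : 0 ≤ Real.log (c+2) := Real.log_nonneg (by linarith)
  have hmono : Real.log (c+2) ≤ Real.log (c+3) := Real.log_le_log (by linarith) (by linarith)
  have hgap : Real.log (c+3) - Real.log (c+2) ≤ 1/(c+2) := by
    have h := Real.log_le_sub_one_of_pos (x := ((c:ℝ)+3) / (c+2)) (by positivity)
    rw [Real.log_div (by positivity) (by positivity)] at h
    have : ((c:ℝ)+3)/(c+2) - 1 = 1/(c+2) := by field_simp; ring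
    linarith [this ▸ h]
  have hlog3 : Real.log (c+3) ≤ Real.log c + 3/c := by
    have h := Real.log_le_sub_one_of_pos (x := ((c:ℝ)+3) / c) (by positivity)
    rw [Real.log_div (by positivity) (ne_of_gt hc0)] at h
    have : ((c:ℝ)+3)/c - 1 = 3/c := by field_simp; ring
    linarith [this ▸ h]
  have hkey : Real.log (c+3) / (c+2) ≤ Real.log c / (1+c) := by
    rw [div_le_div_iff₀ (by linarith) (by linarith)]
    have h1 : Real.log (c+3) * (1+c) ≤ (Real.log c + 3/c) * (1+c) := by
      apply mul_le_mul_of_nonneg_right hlog3 (by linarith)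
    have hcc : (404:ℝ) ≤ c := by exact_mod_cast hc
    have h2 : (3/(c:ℝ)) * (1+c) ≤ 6 := by
      rw [div_mul_eq_mul_div, div_le_iff₀ hc0]
      linarith
    nlinarith [h404, hc0]
  have hl3 : 0 ≤ Real.log (c+3) := le_trans hl2 hmono
  calc (Real.log (c+3))^2/2 - (Real.log (c+2))^2/2
      = ((Real.log (c+3) + Real.log (c+2))/2) * (Real.log (c+3) - Real.log (c+2)) := by ring
    _ ≤ Real.log (c+3) * (1/(c+2)) := by nlinarith
    _ = Real.log (c+3) / (c+2) := by ring
    _ ≤ Real.log c / (1+c) := hkey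

lemma B_ub (k m : ℕ) (hk : 1 ≤ k) (hkm : k ≤ m) :
    ∑ c ∈ Finset.Icc k (m-1), Real.log c / (1 + c) ≤ (Real.log m)^2/2 := by
  set F : ℕ → ℝ := fun x => (Real.log x)^2/2 with hF
  have h1 : ∑ c ∈ Finset.Icc k (m-1), Real.log c / (1 + c)
      ≤ ∑ c ∈ Finset.Icc k (m-1), (F (c+1) - F c) := by
    apply Finset.sum_le_sum
    intro c hc
    have := P1 c (le_trans hk (Finset.mem_Icc.mp hc).1)
    simp only [hF]
    push_cast
    convert this using 3 <;> push_cast <;> ring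
  rw [tele F (m-1) k (by omega), (by omega : m - 1 + 1 = m)] at h1
  have : 0 ≤ F k := by positivity
  simp only [hF] at h1 this
  linarith

lemma B_lb (k m : ℕ) (hm : max k 404 + 2 ≤ m) :
    (Real.log m)^2/2 - (Real.log (max k 404 + 2 : ℕ))^2/2
      ≤ ∑ c ∈ Finset.Icc k (m-1), Real.log c / (1 + c) := by
  set K := max k 404 with hK
  set G : ℕ → ℝ := fun x => (Real.log (x+2:ℕ))^2/2 with hG
  have h0 : ∑ c ∈ Finset.Icc K (m-1), Real.log c / (1 + c)
      ≤ ∑ c ∈ Finset.Icc k (m-1), Real.log c / (1 + c) := by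
    apply Finset.sum_le_sum_of_subset_of_nonneg
    · apply Finset.Icc_subset_Icc_left (le_max_left _ _)
    · intro c hc _
      rcases Nat.eq_zero_or_pos c with rfl | h1c
      · simp
      have hc0 : (0:ℝ) < 1 + c := by positivity
      exact div_nonneg (Real.log_nonneg (by exact_mod_cast h1c)) hc0.le
  have h1 : ∑ c ∈ Finset.Icc K (m-1), (G (c+1) - G c)
      ≤ ∑ c ∈ Finset.Icc K (m-1), Real.log c / (1 + c) := by
    apply Finset.sum_le_sum
    intro c hc
    have := P2 c (le_trans (le_max_right _ _) (Finset.mem_Icc.mp hc).1)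
    simp only [hG]
    push_cast
    exact le_trans (le_of_eq (by norm_num [add_assoc])) this
  rw [tele G (m-1) K (by omega), (by omega : m - 1 + 1 = m)] at h1
  have h3 : (Real.log m)^2/2 ≤ G m := by
    simp only [hG]
    have hm0 : (0:ℝ) < m := by
      have : (1:ℕ) ≤ m := by omega
      exact_mod_cast Nat.lt_of_lt_of_le Nat.zero_lt_one this
    have hle := Real.log_le_log hm0 (by push_cast; linarith : (m:ℝ) ≤ ((m+2:ℕ):ℝ))
    have h4 : 0 ≤ Real.log m := Real.log_nonneg (by exact_mod_cast (by omega : 1 ≤ m))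
    nlinarith
  simp only [hG] at h1 h3
  linarith

-- C1
lemma C1 (T : Finset ℕ) : ∑ U ∈ T.powerset, (∏ x ∈ U, (x:ℝ)) = ∏ x ∈ T, ((x:ℝ)+1) := by
  rw [Finset.prod_add (fun x : ℕ => (x:ℝ)) (fun _ => (1:ℝ)) T]
  simp

-- C3a'
lemma C3a' (s : Finset ℕ) (c : ℕ) (hc : c ∉ s) :
    ∑ U ∈ (insert c s).powerset, (if c ∈ U then ∏ x ∈ U, (x:ℝ) else 0)
      = c * ∏ x ∈ s, ((x:ℝ)+1) := by
  rw [Finset.sum_powerset_insert hc]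
  have h1 : ∑ t ∈ s.powerset, (if c ∈ t then ∏ x ∈ t, (x:ℝ) else 0) = 0 := by
    apply Finset.sum_eq_zero
    intro t ht
    have : c ∉ t := fun h => hc ((Finset.mem_powerset.mp ht) h)
    simp [this]
  rw [h1, zero_add, ← C1, Finset.mul_sum]
  apply Finset.sum_congr rfl
  intro t ht
  have hct : c ∉ t := fun h => hc ((Finset.mem_powerset.mp ht) h)
  rw [if_pos (Finset.mem_insert_self c t), Finset.prod_insert hct]

-- C3a
lemma C3a (T : Finset ℕ) (c : ℕ) (hc : c ∈ T) :
    ∑ U ∈ T.powerset, (if c ∈ U then ∏ x ∈ U, (x:ℝ) else 0)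
      = c * ∏ x ∈ T.erase c, ((x:ℝ)+1) := by
  have := C3a' (T.erase c) c (Finset.notMem_erase c T)
  rwa [Finset.insert_erase hc] at this

-- C3
lemma C3 (T : Finset ℕ) :
    ∑ U ∈ T.powerset, (∏ x ∈ U, (x:ℝ)) * (∑ x ∈ U, Real.log x)
      = ∑ c ∈ T, (c:ℝ) * Real.log c * ∏ x ∈ T.erase c, ((x:ℝ)+1) := by
  have step1 : ∀ U ∈ T.powerset,
      (∏ x ∈ U, (x:ℝ)) * (∑ x ∈ U, Real.log x)
        = ∑ c ∈ T, (if c ∈ U then (∏ x ∈ U, (x:ℝ)) * Real.log c else 0) := by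
    intro U hU
    rw [Finset.mul_sum]
    rw [Finset.sum_ite_mem T U (fun c => (∏ x ∈ U, (x:ℝ)) * Real.log c)]
    rw [Finset.inter_eq_right.mpr (Finset.mem_powerset.mp hU)]
  rw [Finset.sum_congr rfl step1, Finset.sum_comm]
  apply Finset.sum_congr rfl
  intro c hc
  have : ∀ U ∈ T.powerset, (if c ∈ U then (∏ x ∈ U, (x:ℝ)) * Real.log c else 0)
      = (if c ∈ U then (∏ x ∈ U, (x:ℝ)) else 0) * Real.log c := by
    intro U _; split <;> simp
  rw [Finset.sum_congr rfl this, ← Finset.sum_mul, C3a T c hc]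
  ring

lemma H2 (k : ℕ) : ∏ x ∈ Finset.Icc 1 k, x = Nat.factorial k := by
  rw [← Finset.Ico_add_one_right_eq_Icc, Finset.prod_Ico_id_eq_factorial]

lemma H1 (k m : ℕ) (hk : 1 ≤ k) (hkm : k ≤ m) :
    Nat.factorial k * ∏ x ∈ Finset.Icc k (m-1), (x+1) = Nat.factorial m := by
  obtain ⟨m', rfl⟩ : ∃ m', m = m' + 1 := ⟨m-1, by omega⟩
  have hmap : ∏ x ∈ Finset.Icc k (m'+1-1), (x+1) = ∏ y ∈ Finset.Icc (k+1) (m'+1), y := by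
    rw [(by omega : m'+1-1 = m'), ← Finset.map_add_right_Icc k m' 1, Finset.prod_map]
    simp [addRightEmbedding]
  rw [hmap]
  set m := m' + 1 with hm
  have hsplit : Finset.Icc 1 m = Finset.Icc 1 k ∪ Finset.Icc (k+1) m := by
    ext x; simp only [Finset.mem_Icc, Finset.mem_union]; omega
  have hdisj : Disjoint (Finset.Icc 1 k) (Finset.Icc (k+1) m) := by
    rw [Finset.disjoint_left]
    intro a ha hb
    simp only [Finset.mem_Icc] at ha hb; omega
  have := H2 m
  rw [hsplit, Finset.prod_union hdisj, H2 k] at this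
  omega

lemma H1R (k m : ℕ) (hk : 1 ≤ k) (hkm : k ≤ m) :
    ∏ x ∈ Finset.Icc k (m-1), ((x:ℝ)+1) = (Nat.factorial m : ℝ) / (Nat.factorial k : ℝ) := by
  have h := H1 k m hk hkm
  have hf : (0:ℝ) < Nat.factorial k := by positivity
  rw [eq_div_iff (ne_of_gt hf), mul_comm]
  exact_mod_cast congrArg (Nat.cast : ℕ → ℝ) h

lemma H3 (k m : ℕ) (hk : 1 ≤ k) (hkm : k ≤ m) (S : Finset ℕ) (hS : S ⊆ Finset.Icc k (m-1)) :
    Finset.Icc 1 (m-1) \ S = Finset.Icc 1 (k-1) ∪ (Finset.Icc k (m-1) \ S) := by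
  ext x
  simp only [Finset.mem_sdiff, Finset.mem_union, Finset.mem_Icc]
  by_cases hx : x ∈ S
  · have := Finset.mem_Icc.mp (hS hx)
    simp [hx]; omega
  · simp [hx]; omega

lemma H3d (k m : ℕ) (S : Finset ℕ) :
    Disjoint (Finset.Icc 1 (k-1)) (Finset.Icc k (m-1) \ S) := by
  rw [Finset.disjoint_left]
  intro a ha hb
  have h1 := Finset.mem_Icc.mp ha
  have h2 := Finset.mem_Icc.mp (Finset.mem_sdiff.mp hb).1
  omega

lemma H4 (T : Finset ℕ) (f : Finset ℕ → ℝ) :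
    ∑ S ∈ T.powerset, f (T \ S) = ∑ U ∈ T.powerset, f U := by
  apply Finset.sum_bij' (fun S _ => T \ S) (fun U _ => T \ U)
  · intro S hS; exact Finset.mem_powerset.mpr (Finset.sdiff_subset)
  · intro U hU; exact Finset.mem_powerset.mpr (Finset.sdiff_subset)
  · intro S hS; exact Finset.sdiff_sdiff_eq_self (Finset.mem_powerset.mp hS)
  · intro U hU; exact Finset.sdiff_sdiff_eq_self (Finset.mem_powerset.mp hU)
  · intro S hS; rfl

-- cast product split
lemma Psplit (k m : ℕ) (hk : 1 ≤ k) (hkm : k ≤ m) (S : Finset ℕ)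
    (hS : S ⊆ Finset.Icc k (m-1)) :
    ((∏ c ∈ Finset.Icc 1 (m-1) \ S, c : ℕ) : ℝ)
      = (Nat.factorial (k-1) : ℝ) * ∏ x ∈ Finset.Icc k (m-1) \ S, (x:ℝ) := by
  rw [H3 k m hk hkm S hS, Finset.prod_union (H3d k m S)]
  push_cast
  congr 1
  · rw [← Nat.cast_prod, H2]

lemma factk (k : ℕ) (hk : 1 ≤ k) :
    (Nat.factorial k : ℝ) = k * Nat.factorial (k-1) := by
  obtain ⟨k', rfl⟩ : ∃ k', k = k' + 1 := ⟨k-1, by omega⟩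
  simp [Nat.factorial_succ]

lemma IA (k m : ℕ) (hk : 1 ≤ k) (hkm : k ≤ m) :
    ∑ S ∈ (Finset.Icc k (m-1)).powerset, ((∏ c ∈ Finset.Icc 1 (m-1) \ S, c : ℕ) : ℝ)
      = (Nat.factorial m : ℝ) / k := by
  have h1 : ∀ S ∈ (Finset.Icc k (m-1)).powerset,
      ((∏ c ∈ Finset.Icc 1 (m-1) \ S, c : ℕ) : ℝ)
        = (Nat.factorial (k-1) : ℝ) * ∏ x ∈ Finset.Icc k (m-1) \ S, (x:ℝ) :=
    fun S hS => Psplit k m hk hkm S (Finset.mem_powerset.mp hS)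
  rw [Finset.sum_congr rfl h1,
    H4 (Finset.Icc k (m-1)) (fun U => (Nat.factorial (k-1) : ℝ) * ∏ x ∈ U, (x:ℝ)),
    ← Finset.mul_sum, C1, H1R k m hk hkm, factk k hk]
  have hk0 : (0:ℝ) < k := by exact_mod_cast hk
  have hf : (0:ℝ) < Nat.factorial (k-1) := by positivity
  field_simp

lemma IB (k m : ℕ) (hk : 1 ≤ k) (hkm : k ≤ m) :
    ∑ S ∈ (Finset.Icc k (m-1)).powerset,
        ((∏ c ∈ Finset.Icc 1 (m-1) \ S, c : ℕ) : ℝ)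
          * Real.log ((∏ c ∈ Finset.Icc 1 (m-1) \ S, c : ℕ) : ℝ)
      = ((Nat.factorial m : ℝ) / k)
        * (Real.log (Nat.factorial (k-1)) +
            ∑ c ∈ Finset.Icc k (m-1), ((c:ℝ)/(1+c)) * Real.log c) := by
  set T := Finset.Icc k (m-1) with hT
  have h1 : ∀ S ∈ T.powerset,
      ((∏ c ∈ Finset.Icc 1 (m-1) \ S, c : ℕ) : ℝ)
          * Real.log ((∏ c ∈ Finset.Icc 1 (m-1) \ S, c : ℕ) : ℝ)
        = (Nat.factorial (k-1) : ℝ) * (∏ x ∈ T \ S, (x:ℝ))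
            * (Real.log (Nat.factorial (k-1)) + ∑ x ∈ T \ S, Real.log x) := by
    intro S hS
    have hS' := Finset.mem_powerset.mp hS
    rw [Psplit k m hk hkm S hS']
    congr 1
    have hf : (0:ℝ) < Nat.factorial (k-1) := by positivity
    have hprodpos : ∀ x ∈ T \ S, (x:ℝ) ≠ 0 := by
      intro x hx
      have := Finset.mem_Icc.mp (Finset.mem_sdiff.mp hx).1
      have : 1 ≤ x := by omega
      positivity
    have hppos : (0:ℝ) < ∏ x ∈ T \ S, (x:ℝ) := by
      apply Finset.prod_pos
      intro x hx
      have := Finset.mem_Icc.mp (Finset.mem_sdiff.mp hx).1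
      have : 1 ≤ x := by omega
      positivity
    rw [Real.log_mul (ne_of_gt hf) (ne_of_gt hppos), Real.log_prod hprodpos]
  rw [Finset.sum_congr rfl h1,
    H4 T (fun U => (Nat.factorial (k-1) : ℝ) * (∏ x ∈ U, (x:ℝ))
      * (Real.log (Nat.factorial (k-1)) + ∑ x ∈ U, Real.log x))]
  have expand : ∀ U ∈ T.powerset,
      (Nat.factorial (k-1) : ℝ) * (∏ x ∈ U, (x:ℝ))
          * (Real.log (Nat.factorial (k-1)) + ∑ x ∈ U, Real.log x)
        = (Nat.factorial (k-1) : ℝ) * Real.log (Nat.factorial (k-1)) * (∏ x ∈ U, (x:ℝ))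
          + (Nat.factorial (k-1) : ℝ) * ((∏ x ∈ U, (x:ℝ)) * (∑ x ∈ U, Real.log x)) := by
    intro U _; ring
  rw [Finset.sum_congr rfl expand, Finset.sum_add_distrib, ← Finset.mul_sum, ← Finset.mul_sum,
    C1, C3, H1R k m hk hkm]
  have key : ∑ c ∈ T, (c:ℝ) * Real.log c * ∏ x ∈ T.erase c, ((x:ℝ)+1)
      = (∑ c ∈ T, ((c:ℝ)/(1+c)) * Real.log c) * ∏ x ∈ T, ((x:ℝ)+1) := by
    rw [Finset.sum_mul]
    apply Finset.sum_congr rfl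
    intro c hc
    have h := Finset.mul_prod_erase T (fun x => (x:ℝ)+1) hc
    have hc1 : (0:ℝ) < (c:ℝ) + 1 := by positivity
    rw [← h]
    field_simp
    ring
  rw [key, H1R k m hk hkm, factk k hk]
  have hk0 : (0:ℝ) < k := by exact_mod_cast hk
  have hf : (0:ℝ) < Nat.factorial (k-1) := by positivity
  field_simp

lemma main_est (k ℓ m : ℕ) (hk : 1 ≤ k) (hl : 1 ≤ ℓ) (hkm : k ≤ m) :
    |Real.log ((Nat.factorial (ℓ * Nat.factorial m) : ℝ) /
        (∏ S ∈ (Finset.Icc k (m-1)).powerset,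
          (Nat.factorial (ℓ * ∏ c ∈ Finset.Icc 1 (m-1) \ S, c) : ℝ)) ^ k)
      - (ℓ * Nat.factorial m : ℕ) *
          (Real.log m + ∑ c ∈ Finset.Icc k (m-1), Real.log c / (1+c))|
    ≤ (ℓ * Nat.factorial m : ℕ) := by
  set T := Finset.Icc k (m-1) with hT
  set n := ℓ * Nat.factorial m with hn
  have hP1 : ∀ S ∈ T.powerset, 1 ≤ ∏ c ∈ Finset.Icc 1 (m-1) \ S, c := by
    intro S _
    apply Finset.one_le_prod'
    intro c hc
    have := Finset.mem_Icc.mp (Finset.mem_sdiff.mp hc).1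
    omega
  have hN1 : ∀ S ∈ T.powerset, 1 ≤ ℓ * ∏ c ∈ Finset.Icc 1 (m-1) \ S, c := by
    intro S hS
    exact Nat.one_le_iff_ne_zero.mpr (Nat.mul_ne_zero (by omega) (by have := hP1 S hS; omega))
  -- log of the quotient
  have hprodpos : (0:ℝ) < ∏ S ∈ T.powerset,
      (Nat.factorial (ℓ * ∏ c ∈ Finset.Icc 1 (m-1) \ S, c) : ℝ) := by
    apply Finset.prod_pos
    intro S _
    positivity
  have hnum : (0:ℝ) < (Nat.factorial n : ℝ) := by positivity
  have hlogdiv : Real.log ((Nat.factorial n : ℝ) /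
      (∏ S ∈ T.powerset,
        (Nat.factorial (ℓ * ∏ c ∈ Finset.Icc 1 (m-1) \ S, c) : ℝ)) ^ k)
      = Real.log (Nat.factorial n)
        - k * ∑ S ∈ T.powerset,
            Real.log (Nat.factorial (ℓ * ∏ c ∈ Finset.Icc 1 (m-1) \ S, c)) := by
    rw [Real.log_div (ne_of_gt hnum) (by positivity), Real.log_pow,
      Real.log_prod (fun S hS => by positivity)]
  rw [hlogdiv]
  -- Stirling bounds on the sum
  have hub : ∑ S ∈ T.powerset, Real.log (Nat.factorial (ℓ * ∏ c ∈ Finset.Icc 1 (m-1) \ S, c))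
      ≤ ∑ S ∈ T.powerset, ((ℓ * ∏ c ∈ Finset.Icc 1 (m-1) \ S, c : ℕ) : ℝ)
          * Real.log ((ℓ * ∏ c ∈ Finset.Icc 1 (m-1) \ S, c : ℕ) : ℝ) :=
    Finset.sum_le_sum (fun S _ => st_ub _)
  have hlb : ∑ S ∈ T.powerset, (((ℓ * ∏ c ∈ Finset.Icc 1 (m-1) \ S, c : ℕ) : ℝ)
          * Real.log ((ℓ * ∏ c ∈ Finset.Icc 1 (m-1) \ S, c : ℕ) : ℝ)
          - ((ℓ * ∏ c ∈ Finset.Icc 1 (m-1) \ S, c : ℕ) : ℝ))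
      ≤ ∑ S ∈ T.powerset, Real.log (Nat.factorial (ℓ * ∏ c ∈ Finset.Icc 1 (m-1) \ S, c)) :=
    Finset.sum_le_sum (fun S _ => st_lb _)
  rw [Finset.sum_sub_distrib] at hlb
  -- key sums
  have hk0 : (0:ℝ) < k := by exact_mod_cast hk
  have hl0 : (0:ℝ) < ℓ := by exact_mod_cast hl
  have hsumN : ∑ S ∈ T.powerset, ((ℓ * ∏ c ∈ Finset.Icc 1 (m-1) \ S, c : ℕ) : ℝ)
      = ℓ * ((Nat.factorial m : ℝ) / k) := by
    have : ∀ S ∈ T.powerset, ((ℓ * ∏ c ∈ Finset.Icc 1 (m-1) \ S, c : ℕ) : ℝ)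
        = (ℓ:ℝ) * ((∏ c ∈ Finset.Icc 1 (m-1) \ S, c : ℕ) : ℝ) := by
      intro S _; push_cast; ring
    rw [Finset.sum_congr rfl this, ← Finset.mul_sum, IA k m hk hkm]
  set W := ∑ c ∈ T, ((c:ℝ)/(1+c)) * Real.log c with hW
  set SL := ∑ c ∈ T, Real.log c with hSL
  set B := ∑ c ∈ T, Real.log c / (1+c) with hB
  have hsumNlog : ∑ S ∈ T.powerset, ((ℓ * ∏ c ∈ Finset.Icc 1 (m-1) \ S, c : ℕ) : ℝ)
          * Real.log ((ℓ * ∏ c ∈ Finset.Icc 1 (m-1) \ S, c : ℕ) : ℝ)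
      = (ℓ:ℝ) * Real.log ℓ * ((Nat.factorial m : ℝ) / k)
        + (ℓ:ℝ) * (((Nat.factorial m : ℝ) / k)
            * (Real.log (Nat.factorial (k-1)) + W)) := by
    have hterm : ∀ S ∈ T.powerset, ((ℓ * ∏ c ∈ Finset.Icc 1 (m-1) \ S, c : ℕ) : ℝ)
          * Real.log ((ℓ * ∏ c ∈ Finset.Icc 1 (m-1) \ S, c : ℕ) : ℝ)
        = (ℓ:ℝ) * Real.log ℓ * ((∏ c ∈ Finset.Icc 1 (m-1) \ S, c : ℕ) : ℝ)
          + (ℓ:ℝ) * (((∏ c ∈ Finset.Icc 1 (m-1) \ S, c : ℕ) : ℝ)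
              * Real.log ((∏ c ∈ Finset.Icc 1 (m-1) \ S, c : ℕ) : ℝ)) := by
      intro S hS
      have hp : (0:ℝ) < ((∏ c ∈ Finset.Icc 1 (m-1) \ S, c : ℕ) : ℝ) := by
        exact_mod_cast hP1 S hS
      have : ((ℓ * ∏ c ∈ Finset.Icc 1 (m-1) \ S, c : ℕ) : ℝ)
          = (ℓ:ℝ) * ((∏ c ∈ Finset.Icc 1 (m-1) \ S, c : ℕ) : ℝ) := by push_cast; ring
      rw [this, Real.log_mul (ne_of_gt hl0) (ne_of_gt hp)]
      ring
    rw [Finset.sum_congr rfl hterm, Finset.sum_add_distrib, ← Finset.mul_sum, ← Finset.mul_sum,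
      IA k m hk hkm, IB k m hk hkm]
  -- log m! decomposition
  have hlogmf : Real.log (Nat.factorial m : ℝ)
      = Real.log (Nat.factorial (k-1) : ℝ) + SL + Real.log m := by
    have e1 : Real.log (Nat.factorial m : ℝ) = ∑ c ∈ Finset.Icc 1 m, Real.log c := by
      rw [← H2 m]
      push_cast
      rw [Real.log_prod]
      intro x hx
      have := (Finset.mem_Icc.mp hx).1
      have h0 : (0:ℝ) < x := by exact_mod_cast this
      exact ne_of_gt h0
    have e2 : Real.log (Nat.factorial (k-1) : ℝ) = ∑ c ∈ Finset.Icc 1 (k-1), Real.log c := by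
      rw [← H2 (k-1)]
      push_cast
      rw [Real.log_prod]
      intro x hx
      have := (Finset.mem_Icc.mp hx).1
      have h0 : (0:ℝ) < x := by exact_mod_cast this
      exact ne_of_gt h0
    have hsplit : Finset.Icc 1 m = Finset.Icc 1 (k-1) ∪ Finset.Icc k m := by
      ext x; simp only [Finset.mem_Icc, Finset.mem_union]; omega
    have hdisj : Disjoint (Finset.Icc 1 (k-1)) (Finset.Icc k m) := by
      rw [Finset.disjoint_left]; intro a ha hb
      have h1 := Finset.mem_Icc.mp ha; have h2 := Finset.mem_Icc.mp hb; omega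
    have e3 : ∑ c ∈ Finset.Icc k m, Real.log c = SL + Real.log m := by
      obtain ⟨m', rfl⟩ : ∃ m', m = m' + 1 := ⟨m-1, by omega⟩
      rw [Finset.sum_Icc_succ_top (by omega) (fun c : ℕ => Real.log c)]
      simp only [hSL, hT]
      norm_num
    rw [e1, hsplit, Finset.sum_union hdisj, e2, e3]
    ring
  have hSLWB : SL - W = B := by
    rw [hSL, hW, hB, ← Finset.sum_sub_distrib]
    apply Finset.sum_congr rfl
    intro c hc
    have h1 := (Finset.mem_Icc.mp hc).1
    have hc0 : (0:ℝ) < 1 + c := by positivity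
    field_simp
    ring
  have hlogn : Real.log (n:ℝ) = Real.log ℓ + Real.log (Nat.factorial m : ℝ) := by
    rw [hn]
    push_cast
    rw [Real.log_mul (ne_of_gt hl0) (by positivity)]
  have hnR : (n:ℝ) = (ℓ:ℝ) * (Nat.factorial m : ℝ) := by rw [hn]; push_cast; ring
  have hnlb := st_lb n
  have hnub := st_ub n
  have hkN : (k:ℝ) * (↑ℓ * ((Nat.factorial m : ℝ) / k)) = (n:ℝ) := by
    rw [hnR]; field_simp
  have hD : (k:ℝ) * ((ℓ:ℝ) * Real.log ℓ * ((Nat.factorial m : ℝ) / k)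
        + (ℓ:ℝ) * (((Nat.factorial m : ℝ) / k)
            * (Real.log (Nat.factorial (k-1)) + W)))
      = (n:ℝ) * Real.log ℓ + (n:ℝ) * Real.log (Nat.factorial (k-1)) + (n:ℝ) * W := by
    rw [hnR]; field_simp; ring
  rw [abs_le]
  constructor
  · -- lower bound
    have h1 : Real.log (Nat.factorial n) ≥ (n:ℝ) * Real.log n - n := hnlb
    have h2 : (k:ℝ) * ∑ S ∈ T.powerset,
        Real.log (Nat.factorial (ℓ * ∏ c ∈ Finset.Icc 1 (m-1) \ S, c))
        ≤ (n:ℝ) * Real.log ℓ + (n:ℝ) * Real.log (Nat.factorial (k-1)) + (n:ℝ) * W := by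
      calc (k:ℝ) * ∑ S ∈ T.powerset, Real.log (Nat.factorial (ℓ * ∏ c ∈ Finset.Icc 1 (m-1) \ S, c))
          ≤ (k:ℝ) * ∑ S ∈ T.powerset, ((ℓ * ∏ c ∈ Finset.Icc 1 (m-1) \ S, c : ℕ) : ℝ)
              * Real.log ((ℓ * ∏ c ∈ Finset.Icc 1 (m-1) \ S, c : ℕ) : ℝ) := by
            apply mul_le_mul_of_nonneg_left hub hk0.le
        _ = (n:ℝ) * Real.log ℓ + (n:ℝ) * Real.log (Nat.factorial (k-1)) + (n:ℝ) * W := by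
            rw [hsumNlog, hD]
    have key : (n:ℝ) * Real.log n - (n:ℝ) * Real.log ℓ - (n:ℝ) * Real.log (Nat.factorial (k-1))
        - (n:ℝ) * W = (n:ℝ) * (Real.log m + B) := by
      rw [hlogn, hlogmf, ← hSLWB]; ring
    nlinarith [h1, h2, key]
  · -- upper bound
    have h1 : Real.log (Nat.factorial n) ≤ (n:ℝ) * Real.log n := hnub
    have h2 : (n:ℝ) * Real.log ℓ + (n:ℝ) * Real.log (Nat.factorial (k-1)) + (n:ℝ) * W - (n:ℝ)
        ≤ (k:ℝ) * ∑ S ∈ T.powerset,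
            Real.log (Nat.factorial (ℓ * ∏ c ∈ Finset.Icc 1 (m-1) \ S, c)) := by
      have h3 := mul_le_mul_of_nonneg_left hlb hk0.le
      rw [mul_sub, hsumNlog, hsumN, hD, hkN] at h3
      linarith
    have key : (n:ℝ) * Real.log n - (n:ℝ) * Real.log ℓ - (n:ℝ) * Real.log (Nat.factorial (k-1))
        - (n:ℝ) * W = (n:ℝ) * (Real.log m + B) := by
      rw [hlogn, hlogmf, ← hSLWB]; ring
    linarith

lemma aux_tendsto (b : ℝ) :
    Tendsto (fun x : ℝ => 1 + (x + b)/(x^2/2)) atTop (nhds 1) := by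
  have h1 : Tendsto (fun x : ℝ => 2/x + 2*b/x^2) atTop (nhds 0) := by
    have ha : Tendsto (fun x : ℝ => 2/x) atTop (nhds 0) :=
      Tendsto.div_atTop tendsto_const_nhds tendsto_id
    have hb : Tendsto (fun x : ℝ => 2*b/x^2) atTop (nhds 0) :=
      Tendsto.div_atTop tendsto_const_nhds (tendsto_pow_atTop (by norm_num))
    simpa using ha.add hb
  have h2 := (tendsto_const_nhds (x := (1:ℝ)) (f := atTop)).add h1
  rw [add_zero] at h2
  apply h2.congr'
  filter_upwards [eventually_ge_atTop (1:ℝ)] with x hx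
  have hx0 : x ≠ 0 := by linarith
  field_simp

/-- Asymptotics of the STV fooling set size: for fixed `k ≥ 1`, with
`n j = ℓ j · (m j)!` and `m j → ∞` (`ℓ j ≥ 1` arbitrary, so that `ℓ`, `m`,
or both tend to infinity),
`log (n! / (∏_{S ⊆ {k,…,m-1}} (ℓ ∏_{c ∈ {1,…,m-1}∖S} c)!)^k)` is
asymptotically equivalent to `n (log m)² / 2`. -/
theorem stmt19 (k : ℕ) (hk : 1 ≤ k) (ℓ m : ℕ → ℕ) (hℓ : ∀ j, 1 ≤ ℓ j)
    (hm : Tendsto m atTop atTop)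
    (n : ℕ → ℕ) (hn : ∀ j, n j = ℓ j * Nat.factorial (m j)) :
    (fun j => Real.log ((Nat.factorial (n j) : ℝ) /
        (∏ S ∈ (Finset.Icc k (m j - 1)).powerset,
          (Nat.factorial (ℓ j * ∏ c ∈ Finset.Icc 1 (m j - 1) \ S, c) : ℝ)) ^ k))
      ~[atTop] fun j => (n j : ℝ) * (Real.log (m j)) ^ 2 / 2 := by
  set K := max k 404 with hK
  set C := (Real.log (K + 2 : ℕ))^2/2 with hC
  set Lf := fun j => Real.log ((Nat.factorial (n j) : ℝ) /
        (∏ S ∈ (Finset.Icc k (m j - 1)).powerset,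
          (Nat.factorial (ℓ j * ∏ c ∈ Finset.Icc 1 (m j - 1) \ S, c) : ℝ)) ^ k) with hLf
  set Tf := fun j => (n j : ℝ) * (Real.log (m j)) ^ 2 / 2 with hTf
  have hev : ∀ᶠ j in atTop, K + 2 ≤ m j := hm.eventually_ge_atTop (K+2)
  have hlogm : Tendsto (fun j => Real.log (m j)) atTop atTop :=
    Real.tendsto_log_atTop.comp (tendsto_natCast_atTop_atTop.comp hm)
  -- basic facts for large j
  have key : ∀ j, K + 2 ≤ m j → (0 < (n j : ℝ) ∧ 1 ≤ Real.log (m j) ∧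
      1 + (Real.log (m j) - C - 1)/((Real.log (m j))^2/2) ≤ Lf j / Tf j ∧
      Lf j / Tf j ≤ 1 + (Real.log (m j) + 1)/((Real.log (m j))^2/2)) := by
    intro j hj
    have hkm : k ≤ m j := by omega
    have hn0 : 1 ≤ n j := by
      rw [hn j]
      exact Nat.one_le_iff_ne_zero.mpr
        (Nat.mul_ne_zero (by have := hℓ j; omega) (Nat.factorial_ne_zero _))
    have hn' : (0:ℝ) < n j := by exact_mod_cast hn0
    set x := Real.log (m j) with hx
    have hm0 : (0:ℝ) < m j := by
      have : (1:ℕ) ≤ m j := by omega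
      exact_mod_cast Nat.lt_of_lt_of_le Nat.zero_lt_one this
    have hx1 : 1 ≤ x := by
      rw [hx, Real.le_log_iff_exp_le hm0]
      have h1 : Real.exp 1 < 3 := lt_trans Real.exp_one_lt_d9 (by norm_num)
      have : (K:ℝ) + 2 ≤ m j := by exact_mod_cast hj
      have hK4 : (404:ℝ) ≤ K := by exact_mod_cast le_max_right k 404
      linarith
    have hx0 : 0 < x := by linarith
    have hT0 : 0 < Tf j := by
      simp only [hTf]
      positivity
    set B := ∑ c ∈ Finset.Icc k (m j - 1), Real.log c / (1 + c) with hB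
    have hBu : B ≤ x^2/2 := B_ub k (m j) hk hkm
    have hBl : x^2/2 - C ≤ B := B_lb k (m j) hj
    have habs : |Lf j - (n j : ℝ) * (x + B)| ≤ (n j : ℝ) := by
      have := main_est k (ℓ j) (m j) hk (hℓ j) hkm
      rw [← hn j] at this
      exact this
    rw [abs_le] at habs
    refine ⟨hn', hx1, ?_, ?_⟩
    · rw [le_div_iff₀ hT0]
      have hgT : (1 + (x - C - 1)/(x^2/2)) * Tf j
          = (n j:ℝ) * x^2/2 + (n j:ℝ) * (x - C - 1) := by
        simp only [hTf]
        field_simp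
        ring
      rw [hgT]
      have hmul : (n j:ℝ) * (x + x^2/2 - C) ≤ (n j:ℝ) * (x + B) := by
        apply mul_le_mul_of_nonneg_left (by linarith) hn'.le
      linarith
    · rw [div_le_iff₀ hT0]
      have hgT : (1 + (x + 1)/(x^2/2)) * Tf j
          = (n j:ℝ) * x^2/2 + (n j:ℝ) * (x + 1) := by
        simp only [hTf]
        field_simp
        ring
      rw [hgT]
      have hmul : (n j:ℝ) * (x + B) ≤ (n j:ℝ) * (x + x^2/2) := by
        apply mul_le_mul_of_nonneg_left (by linarith) hn'.le
      linarith
  apply Asymptotics.isEquivalent_of_tendsto_one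
  · have hg : Tendsto (fun j => 1 + (Real.log (m j) - C - 1)/((Real.log (m j))^2/2))
        atTop (nhds 1) := by
      have := (aux_tendsto (-C - 1)).comp hlogm
      apply this.congr
      intro j
      simp only [Function.comp_apply]
      ring_nf
    have hh : Tendsto (fun j => 1 + (Real.log (m j) + 1)/((Real.log (m j))^2/2))
        atTop (nhds 1) := by
      have := (aux_tendsto 1).comp hlogm
      apply this.congr
      intro j
      simp only [Function.comp_apply]
    apply tendsto_of_tendsto_of_tendsto_of_le_of_le' hg hh
    · filter_upwards [hev] with j hj
      exact (key j hj).2.2.1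
    · filter_upwards [hev] with j hj
      exact (key j hj).2.2.2
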